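/- For any α₁, α₂ ∈ (0,1) ∪ (1,∞) ∪ {∞}, a sequence of probability distributions (P_n), and a distribution P, D_{f_{α₁}}(P_n||P) → 0 if and only if D_{f_{α₂}}(P_n||P) → 0; i.e., all Arimoto divergences are equivalent in convergence. -/

import Mathlib

open Real MeasureTheory Filter ENNReal

/-- The Arimoto divergence of order `α ∈ (0,1) ∪ (1,∞]` between probability densities
`p` and `q`, where the order `α = ∞` gives the total variation distance. -/
noncomputable def ArimotoD {X : Type*} [MeasurableSpace X] (μ : Measure X)
    (α : ℝ≥0∞) (p q : X → ℝ) : ℝ :=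
  if α = ∞ then (1 / 2) * ∫ x, |p x - q x| ∂μ
  else (α.toReal / (α.toReal - 1)) *
    ((∫ x, (p x ^ α.toReal + q x ^ α.toReal) ^ (1 / α.toReal) ∂μ) - 2 ^ (1 / α.toReal))

open Set Topology Function

/-!
For finite `α = r`, the Arimoto divergence of two probability densities is `∫ F_r(p, q)` with
`F_r(a, b) = r / (r - 1) * ((a ^ r + b ^ r) ^ (1 / r) - 2 ^ (1 / r - 1) * (a + b))`, a continuous,
positively homogeneous function which is nonnegative and vanishes exactly on the diagonal (strict
convexity or concavity of `x ^ r`). Minkowski's inequality for `r > 1`, and monotonicity for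
`r < 1`, give `F_r(a, b) ≤ K |a - b|`. Conversely, compactness of the slice `a + b = 1` gives, for
every `δ > 0`, some `m > 0` with `|a - b| ≤ δ (a + b) + F_r(a, b) / m`. Integrating both bounds,
every Arimoto divergence tends to `0` exactly when the total variation distance does.
-/

lemma tendsto_zero_of_forall_le_add_mul {ι : Type*} {l : Filter ι} {u v : ι → ℝ}
    (hu : ∀ i, 0 ≤ u i) (hv : Tendsto v l (𝓝 0)) (h : ∀ ε > 0, ∃ C, ∀ i, u i ≤ ε + C * v i) :
    Tendsto u l (𝓝 0) := by
  refine tendsto_order.2 ⟨fun a ha => .of_forall fun i => ha.trans_le (hu i), fun ε hε => ?_⟩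
  obtain ⟨C, hC⟩ := h (ε / 2) (half_pos hε)
  have hCv : Tendsto (fun i => C * v i) l (𝓝 0) := by simpa using hv.const_mul C
  filter_upwards [hCv.eventually (gt_mem_nhds (half_pos hε))] with i hi
  linarith [hC i]

lemma exists_abs_sub_le_add_div_of_homogeneous {f : ℝ → ℝ → ℝ} (hf : Continuous (uncurry f))
    (hf0 : ∀ a b, 0 ≤ a → 0 ≤ b → 0 ≤ f a b)
    (hpos : ∀ a b, 0 ≤ a → 0 ≤ b → a ≠ b → 0 < f a b)
    (hhom : ∀ t a b, 0 ≤ t → 0 ≤ a → 0 ≤ b → f (t * a) (t * b) = t * f a b)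
    {δ : ℝ} (hδ : 0 < δ) :
    ∃ m > 0, ∀ a b, 0 ≤ a → 0 ≤ b → |a - b| ≤ δ * (a + b) + f a b / m := by
  have hK : IsCompact (Icc 0 1 ∩ {t : ℝ | δ ≤ |2 * t - 1|}) :=
    isCompact_Icc.inter_right (isClosed_le continuous_const (by fun_prop))
  obtain ⟨m, hm, hmK⟩ := hK.exists_forall_le' (f := fun t => f t (1 - t))
    (hf.comp (by fun_prop : Continuous fun t : ℝ => (t, 1 - t))).continuousOn
    fun t ⟨⟨ht0, ht1⟩, htδ⟩ => hpos t (1 - t) ht0 (by linarith) fun h => by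
      have htδ : δ ≤ |2 * t - 1| := htδ
      rw [show 2 * t - 1 = 0 by linarith, abs_zero] at htδ
      linarith
  refine ⟨m, hm, fun a b ha hb => ?_⟩
  have hab_le : |a - b| ≤ a + b := abs_sub_le_iff.2 ⟨by linarith, by linarith⟩
  by_cases hab : |a - b| ≤ δ * (a + b)
  · have := div_nonneg (hf0 a b ha hb) hm.le
    linarith
  rw [not_le] at hab
  have hs : 0 < a + b := lt_of_le_of_ne (by linarith) fun h => by
    rw [← h, mul_zero] at hab; linarith
  -- evaluate the bound `m` at the normalized point `(a, b) / (a + b)` of the slice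
  have hmab : m ≤ f ((a + b)⁻¹ * a) ((a + b)⁻¹ * b) := by
    have hb' : (a + b)⁻¹ * b = 1 - (a + b)⁻¹ * a := by field_simp; ring
    rw [hb']
    refine hmK _ ⟨⟨by positivity, ?_⟩, ?_⟩
    · rw [inv_mul_le_iff₀ hs]; linarith
    · rw [mem_ofPred_eq, show 2 * ((a + b)⁻¹ * a) - 1 = (a - b) / (a + b) by field_simp; ring,
        abs_div, abs_of_pos hs, le_div_iff₀ hs]
      exact hab.le
  rw [hhom _ a b (by positivity) ha hb, inv_mul_eq_div, le_div_iff₀ hs] at hmab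
  calc |a - b| ≤ a + b := hab_le
    _ ≤ f a b / m := by rw [le_div_iff₀ hm]; linarith
    _ ≤ δ * (a + b) + f a b / m := le_add_of_nonneg_left (by positivity)

section Integral

variable {X : Type*} [MeasurableSpace X] {μ : Measure X}

lemma integrable_comp_of_le_mul_abs_sub {f : ℝ → ℝ → ℝ} {K : ℝ} (hf : Continuous (uncurry f))
    (hf0 : ∀ a b, 0 ≤ a → 0 ≤ b → 0 ≤ f a b)
    (hle : ∀ a b, 0 ≤ a → 0 ≤ b → f a b ≤ K * |a - b|)
    {p q : X → ℝ} (hp : ∀ x, 0 ≤ p x) (hq : ∀ x, 0 ≤ q x) (hpm : Measurable p)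
    (hqm : Measurable q) (hpi : Integrable p μ) (hqi : Integrable q μ) :
    Integrable (fun x => f (p x) (q x)) μ := by
  refine ((hpi.sub hqi).abs.const_mul K).mono'
    (hf.measurable.comp (hpm.prodMk hqm)).aestronglyMeasurable (.of_forall fun x => ?_)
  rw [Real.norm_of_nonneg (hf0 _ _ (hp x) (hq x))]
  exact hle _ _ (hp x) (hq x)

theorem tendsto_integral_iff_tendsto_integral_abs_sub {f : ℝ → ℝ → ℝ} {K : ℝ}
    (hf : Continuous (uncurry f)) (hf0 : ∀ a b, 0 ≤ a → 0 ≤ b → 0 ≤ f a b)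
    (hle : ∀ a b, 0 ≤ a → 0 ≤ b → f a b ≤ K * |a - b|)
    (hlower : ∀ δ > 0, ∃ m > 0, ∀ a b, 0 ≤ a → 0 ≤ b → |a - b| ≤ δ * (a + b) + f a b / m)
    {P : ℕ → X → ℝ} {p : X → ℝ} (hP : ∀ n x, 0 ≤ P n x) (hp : ∀ x, 0 ≤ p x)
    (hPm : ∀ n, Measurable (P n)) (hpm : Measurable p)
    (hP1 : ∀ n, ∫ x, P n x ∂μ = 1) (hp1 : ∫ x, p x ∂μ = 1) :
    Tendsto (fun n => ∫ x, f (P n x) (p x) ∂μ) atTop (𝓝 0) ↔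
      Tendsto (fun n => ∫ x, |P n x - p x| ∂μ) atTop (𝓝 0) := by
  have hPi n : Integrable (P n) μ := .of_integral_ne_zero (by simp [hP1 n])
  have hpi : Integrable p μ := .of_integral_ne_zero (by simp [hp1])
  have hfi n := integrable_comp_of_le_mul_abs_sub hf hf0 hle (hP n) hp (hPm n) hpm (hPi n) hpi
  have hdi n : Integrable (fun x => |P n x - p x|) μ := ((hPi n).sub hpi).abs
  constructor
  · intro hlim
    refine tendsto_zero_of_forall_le_add_mul (fun n => integral_nonneg fun _ => abs_nonneg _)
      hlim fun ε hε => ?_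
    obtain ⟨m, -, hm⟩ := hlower (ε / 2) (half_pos hε)
    refine ⟨m⁻¹, fun n => ?_⟩
    have hsum : Integrable (fun x => P n x + p x) μ := (hPi n).add hpi
    calc ∫ x, |P n x - p x| ∂μ
        ≤ ∫ x, (ε / 2 * (P n x + p x) + m⁻¹ * f (P n x) (p x)) ∂μ :=
          integral_mono (hdi n) ((hsum.const_mul _).add ((hfi n).const_mul _)) fun x => by
            simpa [div_eq_inv_mul] using hm _ _ (hP n x) (hp x)
      _ = ε + m⁻¹ * ∫ x, f (P n x) (p x) ∂μ := by
          rw [integral_add (hsum.const_mul _) ((hfi n).const_mul _), integral_const_mul,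
            integral_const_mul, integral_add (hPi n) hpi, hP1 n, hp1]
          ring
  · intro hlim
    refine squeeze_zero (fun n => integral_nonneg fun x => hf0 _ _ (hP n x) (hp x)) (fun n => ?_)
      (by simpa using hlim.const_mul K)
    calc ∫ x, f (P n x) (p x) ∂μ ≤ ∫ x, K * |P n x - p x| ∂μ :=
          integral_mono (hfi n) ((hdi n).const_mul K) fun x => hle _ _ (hP n x) (hp x)
      _ = K * ∫ x, |P n x - p x| ∂μ := integral_const_mul K _

end Integral

lemma rpow_rpow_one_div {x r : ℝ} (hx : 0 ≤ x) (hr : r ≠ 0) : (x ^ r) ^ (1 / r) = x := by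
  rw [one_div, Real.rpow_rpow_inv hx hr]

lemma rpow_add_rpow_rpow_one_div_le {r a b : ℝ} (hr : 1 ≤ r) (hb : 0 ≤ b) (hba : b ≤ a) :
    (a ^ r + b ^ r) ^ (1 / r) ≤ 2 ^ (1 / r) * b + (a - b) := by
  have hr0 : r ≠ 0 := by positivity
  have h := Real.Lp_add_le_of_nonneg (s := Finset.univ) (f := ![b, b]) (g := ![a - b, 0]) hr
    (by simp [hb]) (by simp [hba])
  simp only [Fin.sum_univ_two, Matrix.cons_val_zero, Matrix.cons_val_one, add_sub_cancel,
    add_zero, Real.zero_rpow hr0] at h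
  rwa [← two_mul, Real.mul_rpow zero_le_two (by positivity), rpow_rpow_one_div hb hr0,
    rpow_rpow_one_div (sub_nonneg.2 hba) hr0] at h

lemma two_rpow_one_div_sub_one_mul_two (r : ℝ) : (2 : ℝ) ^ (1 / r - 1) * 2 = 2 ^ (1 / r) := by
  rw [Real.rpow_sub_one two_ne_zero, div_mul_cancel₀ _ two_ne_zero]

/-- The linear term integrates to `2 ^ (1 / r)` against two probability densities, and makes the
integrand nonnegative. -/
noncomputable def arimotoIntegrand (r a b : ℝ) : ℝ :=
  r / (r - 1) * ((a ^ r + b ^ r) ^ (1 / r) - 2 ^ (1 / r - 1) * (a + b))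

section arimotoIntegrand

variable {r a b : ℝ}

lemma arimotoIntegrand_comm (r a b : ℝ) : arimotoIntegrand r a b = arimotoIntegrand r b a := by
  rw [arimotoIntegrand, arimotoIntegrand, add_comm (a ^ r), add_comm a]

lemma arimotoIntegrand_mul (hr : r ≠ 0) {t : ℝ} (ht : 0 ≤ t) (ha : 0 ≤ a) (hb : 0 ≤ b) :
    arimotoIntegrand r (t * a) (t * b) = t * arimotoIntegrand r a b := by
  rw [arimotoIntegrand, arimotoIntegrand, Real.mul_rpow ht ha, Real.mul_rpow ht hb, ← mul_add,
    Real.mul_rpow (by positivity) (by positivity), rpow_rpow_one_div ht hr]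
  ring

lemma arimotoIntegrand_self (hr : r ≠ 0) (ha : 0 ≤ a) : arimotoIntegrand r a a = 0 := by
  rw [arimotoIntegrand, ← two_mul, Real.mul_rpow zero_le_two (by positivity),
    rpow_rpow_one_div ha hr, ← two_rpow_one_div_sub_one_mul_two r]
  ring

lemma arimotoIntegrand_pos (hr0 : 0 < r) (hr1 : r ≠ 1) (ha : 0 ≤ a) (hb : 0 ≤ b) (hab : a ≠ b) :
    0 < arimotoIntegrand r a b := by
  -- compare with the same expression at the midpoint `(a + b) / 2`
  have hmid : (2 : ℝ) ^ (1 / r - 1) * (a + b) = (2 * ((a + b) / 2) ^ r) ^ (1 / r) := by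
    rw [Real.mul_rpow zero_le_two (by positivity), rpow_rpow_one_div (by positivity) hr0.ne',
      ← two_rpow_one_div_sub_one_mul_two r]
    ring
  have hsmul (x y : ℝ) : (1 / 2 : ℝ) • x + (1 / 2 : ℝ) • y = (x + y) / 2 := by
    simp only [smul_eq_mul]; ring
  rw [arimotoIntegrand, hmid]
  rcases hr1.lt_or_gt with hr1 | hr1
  · have hconc := (Real.strictConcaveOn_rpow hr0 hr1).2 ha hb hab one_half_pos one_half_pos
      (add_halves 1)
    rw [hsmul, hsmul] at hconc
    refine mul_pos_of_neg_of_neg (div_neg_of_pos_of_neg hr0 (by linarith)) (sub_neg.2 ?_)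
    exact Real.rpow_lt_rpow (by positivity) (by linarith) (by positivity)
  · have hconv := (strictConvexOn_rpow hr1).2 ha hb hab one_half_pos one_half_pos (add_halves 1)
    rw [hsmul, hsmul] at hconv
    refine mul_pos (div_pos hr0 (by linarith)) (sub_pos.2 ?_)
    exact Real.rpow_lt_rpow (by positivity) (by linarith) (by positivity)

lemma arimotoIntegrand_nonneg (hr0 : 0 < r) (hr1 : r ≠ 1) (ha : 0 ≤ a) (hb : 0 ≤ b) :
    0 ≤ arimotoIntegrand r a b := by
  rcases eq_or_ne a b with rfl | hab
  · exact (arimotoIntegrand_self hr0.ne' ha).ge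
  · exact (arimotoIntegrand_pos hr0 hr1 ha hb hab).le

lemma arimotoIntegrand_le (hr0 : 0 < r) (hr1 : r ≠ 1) (ha : 0 ≤ a) (hb : 0 ≤ b) :
    arimotoIntegrand r a b ≤ |r / (r - 1)| * 2 ^ (1 / r) * |a - b| := by
  wlog hba : b ≤ a generalizing a b
  · rw [arimotoIntegrand_comm, abs_sub_comm]
    exact this hb ha (le_of_not_ge hba)
  rw [abs_of_nonneg (sub_nonneg.2 hba), arimotoIntegrand, mul_assoc]
  have h2 := two_rpow_one_div_sub_one_mul_two r
  have hk : 0 < (2 : ℝ) ^ (1 / r - 1) := by positivity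
  rcases hr1.lt_or_gt with hr1 | hr1
  · have hc : r / (r - 1) < 0 := div_neg_of_pos_of_neg hr0 (by linarith)
    have hmono : 2 ^ (1 / r) * b ≤ (a ^ r + b ^ r) ^ (1 / r) :=
      calc 2 ^ (1 / r) * b = (b ^ r + b ^ r) ^ (1 / r) := by
            rw [← two_mul, Real.mul_rpow zero_le_two (by positivity), rpow_rpow_one_div hb hr0.ne']
        _ ≤ (a ^ r + b ^ r) ^ (1 / r) := by gcongr
    rw [abs_of_neg hc, neg_mul, ← mul_neg]
    exact mul_le_mul_of_nonpos_left (by nlinarith) hc.le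
  · have hc : 0 < r / (r - 1) := div_pos hr0 (by linarith)
    have hmink := rpow_add_rpow_rpow_one_div_le hr1.le hb hba
    have h1 : (1 : ℝ) ≤ 2 ^ (1 / r) := Real.one_le_rpow one_le_two (by positivity)
    rw [abs_of_pos hc]
    exact mul_le_mul_of_nonneg_left (by nlinarith) hc.le

lemma continuous_arimotoIntegrand (hr : 0 < r) : Continuous (uncurry (arimotoIntegrand r)) := by
  have hpow {s : ℝ} (hs : 0 ≤ s) := Real.continuous_rpow_const hs
  unfold arimotoIntegrand
  exact continuous_const.mul (((hpow (one_div_pos.2 hr).le).comp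
    (((hpow hr.le).comp continuous_fst).add ((hpow hr.le).comp continuous_snd))).sub
    (continuous_const.mul (continuous_fst.add continuous_snd)))

end arimotoIntegrand

section ArimotoD

variable {X : Type*} [MeasurableSpace X] {μ : Measure X}

lemma arimotoD_eq_integral_arimotoIntegrand {α : ℝ≥0∞} (hr0 : 0 < α.toReal) (hr1 : α.toReal ≠ 1)
    {p q : X → ℝ} (hp : ∀ x, 0 ≤ p x) (hq : ∀ x, 0 ≤ q x) (hpm : Measurable p)
    (hqm : Measurable q) (hp1 : ∫ x, p x ∂μ = 1) (hq1 : ∫ x, q x ∂μ = 1) :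
    ArimotoD μ α p q = ∫ x, arimotoIntegrand α.toReal (p x) (q x) ∂μ := by
  set r := α.toReal
  have hα : α ≠ ∞ := (ENNReal.toReal_pos_iff.1 hr0).2.ne
  have hc : r / (r - 1) ≠ 0 := div_ne_zero hr0.ne' (sub_ne_zero.2 hr1)
  have hpi : Integrable p μ := .of_integral_ne_zero (by simp [hp1])
  have hqi : Integrable q μ := .of_integral_ne_zero (by simp [hq1])
  have hlin : Integrable (fun x => 2 ^ (1 / r - 1) * (p x + q x)) μ := (hpi.add hqi).const_mul _
  have hFi := integrable_comp_of_le_mul_abs_sub (continuous_arimotoIntegrand hr0)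
    (fun a b => arimotoIntegrand_nonneg hr0 hr1) (fun a b => arimotoIntegrand_le hr0 hr1)
    hp hq hpm hqm hpi hqi (μ := μ)
  have hN : Integrable (fun x => (p x ^ r + q x ^ r) ^ (1 / r)) μ :=
    ((hFi.const_mul (r / (r - 1))⁻¹).add hlin).congr (.of_forall fun x => by
      simp only [Pi.add_apply, arimotoIntegrand, inv_mul_cancel_left₀ hc, sub_add_cancel])
  simp only [ArimotoD, if_neg hα, arimotoIntegrand]
  rw [integral_const_mul, integral_sub hN hlin, integral_const_mul, integral_add hpi hqi, hp1, hq1,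
    one_add_one_eq_two, two_rpow_one_div_sub_one_mul_two]

theorem tendsto_arimotoD_iff_tendsto_integral_abs_sub {α : ℝ≥0∞} (hα : α ∈ Ioo 0 1 ∪ Ioi 1)
    {P : ℕ → X → ℝ} {p : X → ℝ} (hP : ∀ n x, 0 ≤ P n x) (hp : ∀ x, 0 ≤ p x)
    (hPm : ∀ n, Measurable (P n)) (hpm : Measurable p)
    (hP1 : ∀ n, ∫ x, P n x ∂μ = 1) (hp1 : ∫ x, p x ∂μ = 1) :
    Tendsto (fun n => ArimotoD μ α (P n) p) atTop (𝓝 0) ↔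
      Tendsto (fun n => ∫ x, |P n x - p x| ∂μ) atTop (𝓝 0) := by
  rcases eq_or_ne α ∞ with rfl | hα_top
  · simpa [ArimotoD] using tendsto_const_smul_iff₀ (f := fun n => ∫ x, |P n x - p x| ∂μ)
      (l := atTop) (a := 0) (one_half_pos (α := ℝ)).ne'
  have hr0 : 0 < α.toReal := by
    refine ENNReal.toReal_pos ?_ hα_top
    rcases hα with h | h
    exacts [h.1.ne', (zero_lt_one.trans h).ne']
  have hr1 : α.toReal ≠ 1 := by
    rw [Ne, ENNReal.toReal_eq_one_iff]
    rcases hα with h | h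
    exacts [h.2.ne, h.ne']
  have hD : (fun n => ArimotoD μ α (P n) p) =
      fun n => ∫ x, arimotoIntegrand α.toReal (P n x) (p x) ∂μ :=
    funext fun n => arimotoD_eq_integral_arimotoIntegrand hr0 hr1 (hP n) hp (hPm n) hpm (hP1 n) hp1
  rw [hD]
  exact tendsto_integral_iff_tendsto_integral_abs_sub (continuous_arimotoIntegrand hr0)
    (fun a b => arimotoIntegrand_nonneg hr0 hr1) (fun a b => arimotoIntegrand_le hr0 hr1)
    (fun δ hδ => exists_abs_sub_le_add_div_of_homogeneous (continuous_arimotoIntegrand hr0)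
      (fun a b => arimotoIntegrand_nonneg hr0 hr1) (fun a b => arimotoIntegrand_pos hr0 hr1)
      (fun t a b => arimotoIntegrand_mul hr0.ne') hδ)
    hP hp hPm hpm hP1 hp1

end ArimotoD

theorem arimoto_equivalence_in_convergence {X : Type*} [MeasurableSpace X] (μ : Measure X)
    (α₁ α₂ : ℝ≥0∞)
    (hα₁ : α₁ ∈ Set.Ioo (0:ℝ≥0∞) 1 ∪ Set.Ioi 1)
    (hα₂ : α₂ ∈ Set.Ioo (0:ℝ≥0∞) 1 ∪ Set.Ioi 1)
    (P : ℕ → X → ℝ) (p : X → ℝ)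
    (hP : ∀ n x, 0 ≤ P n x) (hp : ∀ x, 0 ≤ p x)
    (hPm : ∀ n, Measurable (P n)) (hpm : Measurable p)
    (hP1 : ∀ n, ∫ x, P n x ∂μ = 1) (hp1 : ∫ x, p x ∂μ = 1) :
    Filter.Tendsto (fun n => ArimotoD μ α₁ (P n) p) Filter.atTop (nhds 0) ↔
      Filter.Tendsto (fun n => ArimotoD μ α₂ (P n) p) Filter.atTop (nhds 0) :=
  (tendsto_arimotoD_iff_tendsto_integral_abs_sub hα₁ hP hp hPm hpm hP1 hp1).trans
    (tendsto_arimotoD_iff_tendsto_integral_abs_sub hα₂ hP hp hPm hpm hP1 hp1).symm
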